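/- Let x ∈ ℝ^d be a fixed nonzero vector and y ∈ ℝ^d a standard Gaussian random vector. Then E[(⟨x, y⟩² / ‖y‖²) · 1{⟨x,y⟩ > 0}] = ‖x‖²/(2d). Equivalently, the conditional expectation of ⟨x,y⟩²/‖y‖² given ⟨x,y⟩ > 0 equals ‖x‖²/(2d). -/

import Mathlib

/-!
The law of `y` is the standard Gaussian measure `γ` on `ℝᵈ`, which is invariant under every
linear isometry. Invariance under `z ↦ -z` splits the integral over `ℝᵈ` evenly between the half
spaces `⟪x, z⟫ > 0` and `⟪x, z⟫ < 0`, the hyperplane contributing nothing. Invariance under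
reflections shows that `∫ ⟪x, z⟫² / ‖z‖² dγ` depends on `x` only through `‖x‖`; summing it over
the scaled orthonormal basis `‖x‖ eᵢ` and using `∑ᵢ ⟪eᵢ, z⟫² = ‖z‖²` gives `d` times the
integral equal to `‖x‖²`.
-/

open MeasureTheory ProbabilityTheory
open scoped RealInnerProductSpace

theorem setIntegral_pos_eq_half_integral {G : Type*} [AddGroup G] [MeasurableSpace G]
    [MeasurableNeg G] {μ : Measure G} [μ.IsNegInvariant] {f g : G → ℝ} (hf : Integrable f μ)
    (hg : Measurable g) (hf_neg : ∀ z, f (-z) = f z) (hg_neg : ∀ z, g (-z) = -g z)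
    (hfg : ∀ z, g z = 0 → f z = 0) :
    ∫ z in {z | 0 < g z}, f z ∂μ = (∫ z, f z ∂μ) / 2 := by
  set s := {z | 0 < g z}
  have hs : MeasurableSet s := measurableSet_lt measurable_const hg
  have hsplit : ∀ z, s.indicator f z + s.indicator f (-z) = f z := by
    intro z
    rcases lt_trichotomy (g z) 0 with h | h | h
    · simp [s, Set.indicator, hg_neg, hf_neg, h, h.not_gt]
    · simp [s, Set.indicator, hg_neg, h, hfg z h]
    · simp [s, Set.indicator, hg_neg, h, h.le]
  have hint : Integrable (s.indicator f) μ := hf.indicator hs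
  calc ∫ z in s, f z ∂μ = ((∫ z, s.indicator f z ∂μ) + ∫ z, s.indicator f (-z) ∂μ) / 2 := by
        rw [integral_neg_eq_self, integral_indicator hs]; ring
    _ = (∫ z, f z ∂μ) / 2 := by
        rw [← integral_add hint hint.comp_neg]
        simp_rw [hsplit]

section InnerSqDivNormSq

variable {F : Type*} [NormedAddCommGroup F] [InnerProductSpace ℝ F]

theorem inner_sq_div_norm_sq_le (x z : F) : ⟪x, z⟫ ^ 2 / ‖z‖ ^ 2 ≤ ‖x‖ ^ 2 := by
  refine div_le_of_le_mul₀ (by positivity) (by positivity) ?_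
  rw [← mul_pow, ← sq_abs]
  exact pow_le_pow_left₀ (abs_nonneg _) (abs_real_inner_le_norm x z) 2

variable [MeasurableSpace F] [BorelSpace F]

theorem measurable_inner_sq_div_norm_sq (x : F) : Measurable fun z ↦ ⟪x, z⟫ ^ 2 / ‖z‖ ^ 2 :=
  (by fun_prop : Measurable fun z ↦ ⟪x, z⟫ ^ 2).div (by fun_prop)

theorem integrable_inner_sq_div_norm_sq (μ : Measure F) [IsFiniteMeasure μ] (x : F) :
    Integrable (fun z ↦ ⟪x, z⟫ ^ 2 / ‖z‖ ^ 2) μ := by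
  refine (integrable_const (‖x‖ ^ 2)).mono'
    (measurable_inner_sq_div_norm_sq x).aestronglyMeasurable (ae_of_all _ fun z ↦ ?_)
  rw [Real.norm_of_nonneg (by positivity)]
  exact inner_sq_div_norm_sq_le x z

end InnerSqDivNormSq

section StdGaussian

variable {E : Type*} [NormedAddCommGroup E] [InnerProductSpace ℝ E] [FiniteDimensional ℝ E]
  [MeasurableSpace E] [BorelSpace E]

theorem measurePreserving_stdGaussian (L : E ≃ₗᵢ[ℝ] E) :
    MeasurePreserving L (stdGaussian E) (stdGaussian E) :=
  ⟨L.continuous.measurable, stdGaussian_map L⟩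

instance isNegInvariant_stdGaussian : (stdGaussian E).IsNegInvariant :=
  ⟨stdGaussian_map (LinearIsometryEquiv.neg ℝ)⟩

theorem stdGaussian_map_inner (x : E) :
    (stdGaussian E).map (fun z ↦ ⟪x, z⟫) = gaussianReal 0 (‖x‖₊ ^ 2) := by
  have h := IsGaussian.map_eq_gaussianReal (μ := stdGaussian E) (innerSL ℝ x)
  rw [integral_strongDual_stdGaussian, variance_dual_stdGaussian, innerSL_apply_norm] at h
  simpa [Real.toNNReal_pow (norm_nonneg x), norm_toNNReal] using h

theorem stdGaussian_inner_eq_zero {x : E} (hx : x ≠ 0) :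
    stdGaussian E {z | ⟪x, z⟫ = 0} = 0 := by
  have hvar : ‖x‖₊ ^ 2 ≠ 0 := pow_ne_zero 2 (nnnorm_ne_zero_iff.mpr hx)
  have h := Measure.map_apply (μ := stdGaussian E) (f := fun z ↦ ⟪x, z⟫) (by fun_prop)
    (measurableSet_singleton 0)
  rw [stdGaussian_map_inner] at h
  exact h ▸ gaussianReal_absolutelyContinuous 0 hvar Real.volume_singleton

theorem ae_ne_zero_stdGaussian [Nontrivial E] : ∀ᵐ z ∂stdGaussian E, z ≠ 0 := by
  obtain ⟨x, hx⟩ := exists_ne (0 : E)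
  refine measure_mono_null (fun z hz ↦ ?_) (stdGaussian_inner_eq_zero hx)
  simp_all

theorem integral_inner_sq_div_norm_sq_stdGaussian_of_norm_eq {u v : E} (h : ‖u‖ = ‖v‖) :
    ∫ z, ⟪u, z⟫ ^ 2 / ‖z‖ ^ 2 ∂stdGaussian E = ∫ z, ⟪v, z⟫ ^ 2 / ‖z‖ ^ 2 ∂stdGaussian E := by
  set R := Submodule.reflection (ℝ ∙ (u - v))ᗮ
  have hRu : R u = v := Submodule.reflection_sub h
  rw [← hRu, ← (measurePreserving_stdGaussian R).integral_comp R.toHomeomorph.measurableEmbedding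
    fun z ↦ ⟪R u, z⟫ ^ 2 / ‖z‖ ^ 2]
  simp only [LinearIsometryEquiv.inner_map_map, LinearIsometryEquiv.norm_map]

theorem integral_inner_sq_div_norm_sq_stdGaussian (x : E) :
    ∫ z, ⟪x, z⟫ ^ 2 / ‖z‖ ^ 2 ∂stdGaussian E = ‖x‖ ^ 2 / Module.finrank ℝ E := by
  rcases eq_or_ne x 0 with rfl | hx
  · simp
  have : Nontrivial E := ⟨⟨x, 0, hx⟩⟩
  set b := stdOrthonormalBasis ℝ E
  have hsum : ∀ᵐ z ∂stdGaussian E, ∑ i, ⟪‖x‖ • b i, z⟫ ^ 2 / ‖z‖ ^ 2 = ‖x‖ ^ 2 := by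
    filter_upwards [ae_ne_zero_stdGaussian] with z hz
    simp_rw [real_inner_smul_left, mul_pow, ← Finset.sum_div, ← Finset.mul_sum,
      b.sum_sq_inner_right]
    field_simp
  have hterm : ∀ i, ∫ z, ⟪‖x‖ • b i, z⟫ ^ 2 / ‖z‖ ^ 2 ∂stdGaussian E
      = ∫ z, ⟪x, z⟫ ^ 2 / ‖z‖ ^ 2 ∂stdGaussian E := fun i ↦
    integral_inner_sq_div_norm_sq_stdGaussian_of_norm_eq (by simp [norm_smul, b.norm_eq_one])
  have hdim : (Module.finrank ℝ E : ℝ) ≠ 0 := Nat.cast_ne_zero.mpr Module.finrank_pos.ne'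
  refine eq_div_of_mul_eq hdim ?_
  calc (∫ z, ⟪x, z⟫ ^ 2 / ‖z‖ ^ 2 ∂stdGaussian E) * Module.finrank ℝ E
      = ∑ i, ∫ z, ⟪‖x‖ • b i, z⟫ ^ 2 / ‖z‖ ^ 2 ∂stdGaussian E := by simp [hterm, mul_comm]
    _ = ∫ z, ∑ i, ⟪‖x‖ • b i, z⟫ ^ 2 / ‖z‖ ^ 2 ∂stdGaussian E :=
      (integral_finsetSum _ fun i _ ↦ integrable_inner_sq_div_norm_sq _ _).symm
    _ = ‖x‖ ^ 2 := by simp [integral_congr_ae hsum]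

theorem setIntegral_inner_pos_inner_sq_div_norm_sq_stdGaussian (x : E) :
    ∫ z in {z | 0 < ⟪x, z⟫}, ⟪x, z⟫ ^ 2 / ‖z‖ ^ 2 ∂stdGaussian E
      = ‖x‖ ^ 2 / (2 * Module.finrank ℝ E) := by
  rw [setIntegral_pos_eq_half_integral (integrable_inner_sq_div_norm_sq _ x) (by fun_prop)
    (fun z ↦ by simp) (fun z ↦ inner_neg_right x z) (fun z hz ↦ by simp [hz]),
    integral_inner_sq_div_norm_sq_stdGaussian, div_div, mul_comm]

end StdGaussian

theorem map_eq_stdGaussian_of_iIndepFun {ι Ω : Type*} [Fintype ι] [MeasurableSpace Ω]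
    {P : Measure Ω} {y : Ω → EuclideanSpace ℝ ι} (hmeas : ∀ i, Measurable fun ω ↦ y ω i)
    (hindep : iIndepFun (fun i ω ↦ y ω i) P)
    (hdist : ∀ i, P.map (fun ω ↦ y ω i) = gaussianReal 0 1) :
    P.map y = stdGaussian (EuclideanSpace ℝ ι) := by
  have hcoords : Measurable fun ω i ↦ y ω i := measurable_pi_lambda _ hmeas
  have hjoint := hindep.map_fun_eq_pi_map fun i ↦ (hmeas i).aemeasurable
  simp_rw [hdist] at hjoint
  rw [← map_pi_eq_stdGaussian, ← hjoint, Measure.map_map (by fun_prop) hcoords]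
  rfl

theorem gaussian_inner_ratio_positive_part_general {d : ℕ} {Ω : Type*} [MeasurableSpace Ω]
    (P : Measure Ω)
    (x : EuclideanSpace ℝ (Fin d)) (y : Ω → EuclideanSpace ℝ (Fin d))
    (hmeas : ∀ i, Measurable fun ω => y ω i)
    (hindep : iIndepFun (fun i ω => y ω i) P)
    (hdist : ∀ i, P.map (fun ω => y ω i) = gaussianReal 0 1) :
    ∫ ω in {ω | 0 < ⟪x, y ω⟫}, (⟪x, y ω⟫) ^ 2 / ‖y ω‖ ^ 2 ∂P = ‖x‖ ^ 2 / (2 * d) := by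
  have hy : Measurable y :=
    (MeasurableEquiv.toLp 2 _).measurable.comp (measurable_pi_lambda _ hmeas)
  have hS : MeasurableSet {z : EuclideanSpace ℝ (Fin d) | 0 < ⟪x, z⟫} :=
    measurableSet_lt measurable_const (by fun_prop)
  calc ∫ ω in {ω | 0 < ⟪x, y ω⟫}, (⟪x, y ω⟫) ^ 2 / ‖y ω‖ ^ 2 ∂P
      = ∫ z in {z | 0 < ⟪x, z⟫}, ⟪x, z⟫ ^ 2 / ‖z‖ ^ 2 ∂P.map y :=
        (setIntegral_map hS (measurable_inner_sq_div_norm_sq x).aestronglyMeasurable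
          hy.aemeasurable).symm
    _ = ‖x‖ ^ 2 / (2 * d) := by
        rw [map_eq_stdGaussian_of_iIndepFun hmeas hindep hdist,
          setIntegral_inner_pos_inner_sq_div_norm_sq_stdGaussian, finrank_euclideanSpace_fin]

theorem gaussian_inner_ratio_positive_part {d : ℕ} (hd : 0 < d) {Ω : Type*} [MeasurableSpace Ω]
    (P : Measure Ω) [IsProbabilityMeasure P]
    (x : EuclideanSpace ℝ (Fin d)) (hx : x ≠ 0) (y : Ω → EuclideanSpace ℝ (Fin d))
    (hmeas : ∀ i, Measurable fun ω => y ω i)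
    (hindep : iIndepFun (fun i ω => y ω i) P)
    (hdist : ∀ i, P.map (fun ω => y ω i) = gaussianReal 0 1) :
    ∫ ω in {ω | 0 < ⟪x, y ω⟫}, (⟪x, y ω⟫) ^ 2 / ‖y ω‖ ^ 2 ∂P = ‖x‖ ^ 2 / (2 * d) :=
  gaussian_inner_ratio_positive_part_general P x y hmeas hindep hdist
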